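/- arXiv:2107.00889 — 2 statements merged into one kernel-verified Lean document; each statement's English description precedes it below -/
import Mathlib

section
/- Let p be a prime, 0 < α < 1, and τ ∈ ℚ_p with |τ|_p < 1. Then the integral of |ξ|_p^{-α-1}·(|ξ + τ|_p^{α-1} - |τ|_p^{α-1}) over {ξ : |ξ|_p ≥ 1} with respect to the normalized Haar measure equals 1 - (1 - 1/p)·(1/(1 - p^{-α}))·|τ|_p^{α-1}. -/
open MeasureTheory Topology Filter

noncomputable instance (p : ℕ) [Fact p.Prime] : MeasurableSpace ℚ_[p] := borel _
instance (p : ℕ) [Fact p.Prime] : BorelSpace ℚ_[p] := ⟨rfl⟩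

/-- The closed unit ball of `ℚ_[p]` as a positive compact set. -/
noncomputable def padicUnitBall (p : ℕ) [Fact p.Prime] :
    TopologicalSpace.PositiveCompacts ℚ_[p] where
  carrier := {x : ℚ_[p] | ‖x‖ ≤ 1}
  isCompact' := by
    have h : {x : ℚ_[p] | ‖x‖ ≤ 1} = Metric.closedBall 0 1 := by
      ext x; simp [dist_eq_norm]
    rw [h]
    exact isCompact_closedBall 0 1
  interior_nonempty' := by
    refine ⟨0, ?_⟩
    have h : Metric.ball (0 : ℚ_[p]) 1 ⊆ {x : ℚ_[p] | ‖x‖ ≤ 1} := by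
      intro x hx
      simp only [Metric.mem_ball, dist_eq_norm, sub_zero] at hx
      exact le_of_lt hx
    exact interior_maximal h Metric.isOpen_ball (Metric.mem_ball_self one_pos)

/-- The Haar measure on `ℚ_[p]`, normalized so that `ℤ_[p]` has measure 1. -/
noncomputable def padicHaar (p : ℕ) [Fact p.Prime] : Measure ℚ_[p] :=
  Measure.addHaarMeasure (padicUnitBall p)

/-!
On `1 ≤ ‖ξ‖` the ultrametric inequality gives `‖ξ + τ‖ = ‖ξ‖`, so the integrand is
`‖ξ‖ ^ (-2) - ‖τ‖ ^ (α - 1) * ‖ξ‖ ^ (-α - 1)`. For `s > 1`, splitting `{1 ≤ ‖ξ‖}` into the spheres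
`‖ξ‖ = p ^ k`, `k ≥ 0`, of measure `p ^ k * (1 - p⁻¹)` turns `∫ ‖ξ‖ ^ (-s)` into the geometric
series `(1 - p⁻¹) * ∑ (p ^ (1 - s)) ^ k`. The sphere measures come from the fact that the ball of
radius `p ^ n` is the disjoint union of `p` translates of the ball of radius `p ^ (n - 1)`, one for
each residue class mod `p`.
-/

open Function Metric
open scoped ENNReal

namespace Padic

variable {p : ℕ} [Fact p.Prime]

lemma one_lt_natCast_prime : 1 < (p : ℝ) := by exact_mod_cast (Fact.out : p.Prime).one_lt

lemma natCast_prime_pos : 0 < (p : ℝ) := zero_lt_one.trans one_lt_natCast_prime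

lemma one_sub_inv_natCast_prime_pos : 0 < 1 - (p : ℝ)⁻¹ :=
  sub_pos.2 (inv_lt_one_of_one_lt₀ one_lt_natCast_prime)

lemma ball_zero_zpow_eq_closedBall (n : ℤ) :
    ball (0 : ℚ_[p]) ((p : ℝ) ^ n) = closedBall 0 ((p : ℝ) ^ (n - 1)) := by
  ext x
  simp only [mem_ball_zero_iff, mem_closedBall_zero_iff, norm_le_pow_iff_norm_lt_pow_add_one,
    sub_add_cancel]

lemma norm_natCast_sub_natCast_eq_one {i j : ℕ} (hi : i < p) (hj : j < p) (hij : i ≠ j) :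
    ‖(i : ℚ_[p]) - j‖ = 1 := by
  have hndvd : ¬ (p : ℤ) ∣ (i : ℤ) - j := fun h => hij <| by
    have := Int.eq_zero_of_abs_lt_dvd h (by rw [abs_lt]; omega)
    omega
  have h := (norm_intCast_lt_one_iff (p := p)).not.2 hndvd
  push_cast at h
  exact le_antisymm (by exact_mod_cast norm_int_le_one (p := p) ((i : ℤ) - j)) (not_lt.1 h)

lemma exists_lt_norm_sub_natCast_lt_one {y : ℚ_[p]} (hy : ‖y‖ ≤ 1) :
    ∃ j < p, ‖y - j‖ < 1 := by
  obtain ⟨j, hjp, hj⟩ := PadicInt.exists_mem_range ⟨y, hy⟩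
  refine ⟨j, hjp, ?_⟩
  rwa [IsLocalRing.mem_maximalIdeal, PadicInt.mem_nonunits] at hj

lemma mem_ball_zpow_iff {x c : ℚ_[p]} {n : ℤ} :
    x ∈ ball (c * (p : ℚ_[p]) ^ (-n)) ((p : ℝ) ^ n) ↔ ‖x * (p : ℚ_[p]) ^ n - c‖ < 1 := by
  have hp : (p : ℚ_[p]) ≠ 0 := by exact_mod_cast (Fact.out : p.Prime).ne_zero
  have hx : x - c * (p : ℚ_[p]) ^ (-n) = (x * (p : ℚ_[p]) ^ n - c) * (p : ℚ_[p]) ^ (-n) := by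
    rw [sub_mul, mul_assoc, ← zpow_add₀ hp, add_neg_cancel, zpow_zero, mul_one]
  rw [mem_ball_iff_norm, hx, norm_mul, norm_p_zpow, neg_neg,
    mul_lt_iff_lt_one_left (zpow_pos natCast_prime_pos n)]

lemma closedBall_zero_zpow_eq_biUnion_ball (n : ℤ) :
    closedBall (0 : ℚ_[p]) ((p : ℝ) ^ n) =
      ⋃ j ∈ Finset.range p, ball ((j : ℚ_[p]) * (p : ℚ_[p]) ^ (-n)) ((p : ℝ) ^ n) := by
  ext x
  simp only [Set.mem_iUnion, Finset.mem_range, exists_prop, mem_ball_zpow_iff]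
  have hx : x ∈ closedBall 0 ((p : ℝ) ^ n) ↔ ‖x * (p : ℚ_[p]) ^ n‖ ≤ 1 := by
    rw [mem_closedBall_zero_iff, norm_mul, norm_p_zpow, zpow_neg, ← div_eq_mul_inv,
      div_le_one (zpow_pos natCast_prime_pos n)]
  rw [hx]
  refine ⟨exists_lt_norm_sub_natCast_lt_one, fun ⟨j, _, hj⟩ => ?_⟩
  calc ‖x * (p : ℚ_[p]) ^ n‖ = ‖(x * (p : ℚ_[p]) ^ n - j) + j‖ := by rw [sub_add_cancel]
    _ ≤ max ‖x * (p : ℚ_[p]) ^ n - j‖ ‖(j : ℚ_[p])‖ := nonarchimedean _ _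
    _ ≤ 1 := max_le hj.le (by exact_mod_cast norm_int_le_one (p := p) j)

lemma pairwiseDisjoint_ball_zpow (n : ℤ) :
    (Finset.range p : Set ℕ).PairwiseDisjoint
      fun j => ball ((j : ℚ_[p]) * (p : ℚ_[p]) ^ (-n)) ((p : ℝ) ^ n) := by
  intro i hi j hj hij
  refine Set.disjoint_left.2 fun x hxi hxj => ?_
  rw [Finset.coe_range, Set.mem_Iio] at hi hj
  rw [mem_ball_zpow_iff] at hxi hxj
  set y := x * (p : ℚ_[p]) ^ n
  have hlt : ‖(i : ℚ_[p]) - j‖ < 1 := by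
    calc ‖(i : ℚ_[p]) - j‖ = ‖(y - j) + (i - y)‖ := by ring_nf
      _ ≤ max ‖y - j‖ ‖(i : ℚ_[p]) - y‖ := nonarchimedean _ _
      _ < 1 := max_lt hxj (by rwa [norm_sub_rev])
  exact hlt.ne (norm_natCast_sub_natCast_eq_one hi hj hij)

lemma setOf_one_le_norm_eq_iUnion_sphere :
    {x : ℚ_[p] | 1 ≤ ‖x‖} = ⋃ k : ℕ, sphere 0 ((p : ℝ) ^ (k : ℤ)) := by
  ext x
  simp only [Set.mem_ofPred_eq, Set.mem_iUnion, mem_sphere_zero_iff_norm]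
  constructor
  · intro hx
    have hx0 : x ≠ 0 := by rintro rfl; norm_num at hx
    rw [norm_eq_zpow_neg_valuation hx0] at hx ⊢
    have hv : 0 ≤ -x.valuation := (one_le_zpow_iff_right₀ one_lt_natCast_prime).1 hx
    exact ⟨(-x.valuation).toNat, by rw [Int.toNat_of_nonneg hv]⟩
  · rintro ⟨k, hk⟩
    exact hk ▸ one_le_zpow₀ one_lt_natCast_prime.le (Int.natCast_nonneg k)

lemma pairwise_disjoint_sphere_zero_zpow :
    Pairwise (Disjoint on fun k : ℕ => sphere (0 : ℚ_[p]) ((p : ℝ) ^ (k : ℤ))) := by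
  intro i j hij
  refine Set.disjoint_left.2 fun x hxi hxj => hij ?_
  rw [mem_sphere_zero_iff_norm] at hxi hxj
  exact_mod_cast zpow_right_injective₀ natCast_prime_pos one_lt_natCast_prime.ne'
    (hxi.symm.trans hxj)

end Padic

variable {p : ℕ} [Fact p.Prime]

instance : (padicHaar p).IsAddHaarMeasure := Measure.isAddHaarMeasure_addHaarMeasure _

lemma padicHaar_closedBall_zero_zpow_eq_mul (n : ℤ) :
    padicHaar p (closedBall 0 ((p : ℝ) ^ n))
      = p * padicHaar p (closedBall 0 ((p : ℝ) ^ (n - 1))) := by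
  rw [Padic.closedBall_zero_zpow_eq_biUnion_ball,
    measure_biUnion_finset (Padic.pairwiseDisjoint_ball_zpow n) fun _ _ => measurableSet_ball]
  simp only [Measure.addHaar_ball_center, Padic.ball_zero_zpow_eq_closedBall, Finset.sum_const,
    Finset.card_range, nsmul_eq_mul]

lemma padicHaar_closedBall_zero_zpow (n : ℤ) :
    padicHaar p (closedBall 0 ((p : ℝ) ^ n)) = ENNReal.ofReal ((p : ℝ) ^ n) := by
  have hstep (m : ℤ) : ENNReal.ofReal ((p : ℝ) ^ m) = p * ENNReal.ofReal ((p : ℝ) ^ (m - 1)) := by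
    rw [← ENNReal.ofReal_natCast, ← ENNReal.ofReal_mul (Nat.cast_nonneg p), ← zpow_one_add₀
      Padic.natCast_prime_pos.ne', add_sub_cancel]
  induction n using Int.induction_on with
  | zero =>
    have hball : closedBall (0 : ℚ_[p]) 1 = padicUnitBall p := by
      ext x
      simp [padicUnitBall]
      rfl
    rw [zpow_zero, hball, padicHaar, Measure.addHaarMeasure_self, ENNReal.ofReal_one]
  | succ n ih =>
    rw [padicHaar_closedBall_zero_zpow_eq_mul, add_sub_cancel_right, ih, hstep ((n : ℤ) + 1),
      add_sub_cancel_right]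
  | pred n ih =>
    rw [padicHaar_closedBall_zero_zpow_eq_mul, hstep] at ih
    exact (ENNReal.mul_right_inj (by exact_mod_cast (Fact.out : p.Prime).ne_zero)
      (ENNReal.natCast_ne_top p)).1 ih

lemma padicHaar_sphere_zero_zpow (k : ℤ) :
    padicHaar p (sphere 0 ((p : ℝ) ^ k)) = ENNReal.ofReal ((p : ℝ) ^ k * (1 - (p : ℝ)⁻¹)) := by
  rw [← closedBall_sdiff_ball, measure_sdiff ball_subset_closedBall
      measurableSet_ball.nullMeasurableSet (measure_ball_lt_top (μ := padicHaar p)).ne,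
    Padic.ball_zero_zpow_eq_closedBall, padicHaar_closedBall_zero_zpow,
    padicHaar_closedBall_zero_zpow, ← ENNReal.ofReal_sub _ (zpow_nonneg (Nat.cast_nonneg p) _),
    zpow_sub_one₀ Padic.natCast_prime_pos.ne', mul_one_sub]

section NormRpowNeg

variable {s : ℝ}

lemma setLIntegral_one_le_norm_rpow_neg (hs : 1 < s) :
    ∫⁻ x in {x : ℚ_[p] | 1 ≤ ‖x‖}, ENNReal.ofReal (‖x‖ ^ (-s)) ∂padicHaar p
      = ENNReal.ofReal ((1 - (p : ℝ)⁻¹) / (1 - (p : ℝ) ^ (1 - s))) := by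
  set r := (p : ℝ) ^ (1 - s)
  have hr0 : 0 ≤ r := Real.rpow_nonneg (Nat.cast_nonneg p) _
  have hr1 : r < 1 := Real.rpow_lt_one_of_one_lt_of_neg Padic.one_lt_natCast_prime (by linarith)
  have hc := Padic.one_sub_inv_natCast_prime_pos (p := p)
  have hsphere (k : ℕ) : ∫⁻ x in sphere 0 ((p : ℝ) ^ (k : ℤ)), ENNReal.ofReal (‖x‖ ^ (-s))
      ∂padicHaar p = ENNReal.ofReal ((1 - (p : ℝ)⁻¹) * r ^ k) := by
    rw [setLIntegral_congr_fun isClosed_sphere.measurableSet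
        fun x hx => by rw [mem_sphere_zero_iff_norm.1 hx],
      setLIntegral_const, padicHaar_sphere_zero_zpow, ← ENNReal.ofReal_mul (by positivity),
      zpow_natCast, Real.rpow_pow_comm (Nat.cast_nonneg p), show 1 - s = -s + 1 by ring,
      Real.rpow_add_one (pow_ne_zero k Padic.natCast_prime_pos.ne')]
    ring_nf
  rw [Padic.setOf_one_le_norm_eq_iUnion_sphere,
    lintegral_iUnion (fun _ => isClosed_sphere.measurableSet)
      Padic.pairwise_disjoint_sphere_zero_zpow,
    tsum_congr hsphere, ← ENNReal.ofReal_tsum_of_nonneg (fun k => by positivity)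
      ((summable_geometric_of_lt_one hr0 hr1).mul_left _),
    tsum_mul_left, tsum_geometric_of_lt_one hr0 hr1, div_eq_mul_inv]

lemma integrableOn_one_le_norm_rpow_neg (hs : 1 < s) :
    IntegrableOn (fun x : ℚ_[p] => ‖x‖ ^ (-s)) {x | 1 ≤ ‖x‖} (padicHaar p) := by
  refine ⟨(measurable_norm.pow_const _).aestronglyMeasurable, ?_⟩
  rw [hasFiniteIntegral_iff_ofReal (ae_of_all _ fun x => by positivity),
    setLIntegral_one_le_norm_rpow_neg hs]
  exact ENNReal.ofReal_lt_top

lemma setIntegral_one_le_norm_rpow_neg (hs : 1 < s) :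
    ∫ x in {x : ℚ_[p] | 1 ≤ ‖x‖}, ‖x‖ ^ (-s) ∂padicHaar p
      = (1 - (p : ℝ)⁻¹) / (1 - (p : ℝ) ^ (1 - s)) := by
  rw [integral_eq_lintegral_of_nonneg_ae (ae_of_all _ fun x => by positivity)
      (measurable_norm.pow_const _).aestronglyMeasurable,
    setLIntegral_one_le_norm_rpow_neg hs, ENNReal.toReal_ofReal]
  have hr1 : (p : ℝ) ^ (1 - s) < 1 :=
    Real.rpow_lt_one_of_one_lt_of_neg Padic.one_lt_natCast_prime (by linarith)
  exact div_nonneg Padic.one_sub_inv_natCast_prime_pos.le (by linarith)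

end NormRpowNeg

theorem stmt8_general (p : ℕ) [Fact p.Prime] (α : ℝ) (hα0 : 0 < α)
    (τ : ℚ_[p]) (hτ : ‖τ‖ < 1) :
    ∫ ξ in {ξ : ℚ_[p] | 1 ≤ ‖ξ‖},
        ‖ξ‖ ^ (-α - 1) * (‖ξ + τ‖ ^ (α - 1) - ‖τ‖ ^ (α - 1)) ∂(padicHaar p)
      = 1 - (1 - 1 / (p : ℝ)) * (1 / (1 - (p : ℝ) ^ (-α))) * ‖τ‖ ^ (α - 1) := by
  have hsplit : Set.EqOn
      (fun ξ : ℚ_[p] => ‖ξ‖ ^ (-α - 1) * (‖ξ + τ‖ ^ (α - 1) - ‖τ‖ ^ (α - 1)))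
      (fun ξ => ‖ξ‖ ^ (-2 : ℝ) - ‖τ‖ ^ (α - 1) * ‖ξ‖ ^ (-(α + 1))) {ξ | 1 ≤ ‖ξ‖} := by
    intro ξ (hξ : 1 ≤ ‖ξ‖)
    have hξτ : ‖ξ + τ‖ = ‖ξ‖ := by
      rw [Padic.add_eq_max_of_ne (hτ.trans_le hξ).ne', max_eq_left (hτ.le.trans hξ)]
    dsimp only
    rw [hξτ, mul_sub, ← Real.rpow_add (one_pos.trans_le hξ)]
    ring_nf
  rw [setIntegral_congr_fun (measurableSet_le measurable_const measurable_norm) hsplit,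
    integral_sub (integrableOn_one_le_norm_rpow_neg one_lt_two)
      ((integrableOn_one_le_norm_rpow_neg (by linarith)).const_mul _),
    integral_const_mul, setIntegral_one_le_norm_rpow_neg one_lt_two,
    setIntegral_one_le_norm_rpow_neg (by linarith), show (1 : ℝ) - 2 = -1 by norm_num,
    Real.rpow_neg_one, div_self Padic.one_sub_inv_natCast_prime_pos.ne',
    show (1 : ℝ) - (α + 1) = -α by ring]
  ring

theorem stmt8 (p : ℕ) [Fact p.Prime] (α : ℝ) (hα0 : 0 < α) (hα1 : α < 1)
    (τ : ℚ_[p]) (hτ0 : τ ≠ 0) (hτ : ‖τ‖ < 1) :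
    ∫ ξ in {ξ : ℚ_[p] | 1 ≤ ‖ξ‖},
        ‖ξ‖ ^ (-α - 1) * (‖ξ + τ‖ ^ (α - 1) - ‖τ‖ ^ (α - 1)) ∂(padicHaar p)
      = 1 - (1 - 1 / (p : ℝ)) * (1 / (1 - (p : ℝ) ^ (-α))) * ‖τ‖ ^ (α - 1) :=
  stmt8_general p α hα0 τ hτ
end

section
/- Let p be a prime. Define R₁ : ℚ_p → ℝ by R₁(τ) = p/(p+1) − (p(p−1)/((p+1)·log p))·log|τ|_p for 0 ≠ |τ|_p < 1 and R₁(τ) = 0 for |τ|_p ≥ 1. Then R₁(τ) > 0 whenever 0 < |τ|_p < 1, and the integral of R₁ over ℚ_p with respect to the normalized Haar measure equals 1. -/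
open MeasureTheory Topology Filter

/-! `ℤ_[p]` is the disjoint union of the `p ^ n` balls `j + p ^ n ℤ_[p]` with `0 ≤ j < p ^ n`,
so by translation invariance the ball of radius `p ^ (-n)` has measure `p ^ (-n)` and the sphere
of that radius has measure `p ^ (-n) - p ^ (-n - 1)`. On that sphere `R₁` is the constant
`p / (p + 1) + n * p (p - 1) / (p + 1)`, so the integral is an arithmetico-geometric series,
whose sum is `1`. -/

open Metric Function

lemma hasSum_affine_mul_geometric_shell {K : Type*} [NormedField K] [CompleteSpace K] {q : K}
    (hq : ‖q‖ < 1) (a b : K) :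
    HasSum (fun n : ℕ => (a + (n + 1) * b) * (q ^ (n + 1) - q ^ (n + 2)))
      (a * q + b * q / (1 - q)) := by
  have hq1 : 1 - q ≠ 0 := sub_ne_zero.mpr fun h => by simp [← h] at hq
  have hgeom := hasSum_geometric_of_norm_lt_one hq
  have hcoe := hasSum_coe_mul_geometric_of_norm_lt_one hq
  have hsum := ((hgeom.mul_left a).add ((hcoe.add hgeom).mul_left b)).mul_left ((1 - q) * q)
  exact (congrArg₂ HasSum (funext fun n => by ring) (by field_simp; ring)).mp hsum

lemma hasSum_shell_weights {P : ℝ} (hP : 1 < P) :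
    HasSum (fun n : ℕ => (P / (P + 1) + (n + 1) * (P * (P - 1) / (P + 1))) *
      (P ^ (-(n + 1 : ℤ)) - P ^ (-(n + 2 : ℤ)))) 1 := by
  have hP0 : P ≠ 0 := by positivity
  have hP1 : P - 1 ≠ 0 := by linarith
  have hq : ‖P⁻¹‖ < 1 := by
    rw [norm_inv, Real.norm_of_nonneg (by positivity)]
    exact inv_lt_one_of_one_lt₀ hP
  have hzpow : ∀ k : ℕ, P ^ (-(k : ℤ)) = P⁻¹ ^ k := fun k => by
    rw [zpow_neg, zpow_natCast, inv_pow]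
  refine (congrArg₂ HasSum (funext fun n => ?_) ?_).mp
    (hasSum_affine_mul_geometric_shell hq (P / (P + 1)) (P * (P - 1) / (P + 1)))
  · rw [← hzpow, ← hzpow]; push_cast; ring_nf
  · field_simp
    ring

namespace Padic

variable {p : ℕ} [Fact p.Prime]

lemma one_lt_natCast : (1 : ℝ) < p := by exact_mod_cast (Fact.out : p.Prime).one_lt

lemma natCast_pos : (0 : ℝ) < p := zero_lt_one.trans one_lt_natCast

instance : (padicHaar p).IsAddHaarMeasure := by
  unfold padicHaar; infer_instance

lemma padicHaar_closedBall_zero_one : padicHaar p (closedBall 0 1) = 1 := by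
  have : closedBall (0 : ℚ_[p]) 1 = padicUnitBall p := by
    ext x; rw [mem_closedBall_zero_iff]; rfl
  rw [this, padicHaar, Measure.addHaarMeasure_self]

lemma closedBall_zero_one_eq_iUnion (n : ℕ) :
    closedBall (0 : ℚ_[p]) 1 =
      ⋃ j : Fin (p ^ n), closedBall ((j : ℕ) : ℚ_[p]) ((p : ℝ) ^ (-(n : ℤ))) := by
  ext x
  simp only [Set.mem_iUnion, mem_closedBall, dist_eq_norm, sub_zero]
  constructor
  · intro hx
    set z : ℤ_[p] := ⟨x, hx⟩
    refine ⟨⟨z.appr n, z.appr_lt n⟩, ?_⟩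
    simpa [PadicInt.norm_def] using
      (PadicInt.norm_le_pow_iff_mem_span_pow _ n).mpr (z.appr_spec n)
  · rintro ⟨j, hj⟩
    calc ‖x‖ = ‖(x - j) + j‖ := by rw [sub_add_cancel]
      _ ≤ max ‖x - j‖ ‖((j : ℕ) : ℚ_[p])‖ := IsUltrametricDist.norm_add_le_max _ _
      _ ≤ 1 := max_le (hj.trans (zpow_le_one_of_nonpos₀ one_lt_natCast.le (by omega)))
                (by exact_mod_cast norm_int_le_one (j : ℕ))

lemma pairwise_disjoint_closedBall_natCast (n : ℕ) :
    Pairwise (Disjoint on fun j : Fin (p ^ n) =>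
      closedBall ((j : ℕ) : ℚ_[p]) ((p : ℝ) ^ (-(n : ℤ)))) := by
  intro i j hij
  refine Set.disjoint_left.mpr fun x hi hj => hij ?_
  have hdist : ‖((((j : ℕ) : ℤ) - ((i : ℕ) : ℤ) : ℤ) : ℚ_[p])‖ ≤ (p : ℝ) ^ (-(n : ℤ)) := by
    rw [mem_closedBall, dist_comm] at hj
    calc _ = dist ((j : ℕ) : ℚ_[p]) ((i : ℕ) : ℚ_[p]) := by push_cast; rw [dist_eq_norm]
      _ ≤ max (dist ((j : ℕ) : ℚ_[p]) x) (dist x ((i : ℕ) : ℚ_[p])) :=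
        dist_triangle_max _ _ _
      _ ≤ _ := max_le hj hi
  have hi : ((i : ℕ) : ℤ) < (p : ℤ) ^ n := by exact_mod_cast i.isLt
  have hj : ((j : ℕ) : ℤ) < (p : ℤ) ^ n := by exact_mod_cast j.isLt
  have := Int.eq_zero_of_abs_lt_dvd ((norm_int_le_pow_iff_dvd _ n).mp hdist)
    (abs_sub_lt_iff.mpr ⟨by omega, by omega⟩)
  exact Fin.ext (by omega)

lemma padicHaar_closedBall (x : ℚ_[p]) (n : ℕ) :
    padicHaar p (closedBall x ((p : ℝ) ^ (-(n : ℤ)))) =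
      ENNReal.ofReal ((p : ℝ) ^ (-(n : ℤ))) := by
  have hcover := congrArg (padicHaar p) (closedBall_zero_one_eq_iUnion (p := p) n)
  rw [padicHaar_closedBall_zero_one, measure_iUnion (pairwise_disjoint_closedBall_natCast n)
    fun _ => measurableSet_closedBall] at hcover
  simp only [Measure.addHaar_closedBall_center _ (_ : ℚ_[p]), tsum_fintype, Finset.sum_const,
    Finset.card_univ, Fintype.card_fin, nsmul_eq_mul] at hcover
  rw [Measure.addHaar_closedBall_center,
    ENNReal.eq_inv_of_mul_eq_one_left ((mul_comm _ _).trans hcover.symm), zpow_neg,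
    zpow_natCast, ENNReal.ofReal_inv_of_pos (pow_pos natCast_pos n), ← Nat.cast_pow,
    ENNReal.ofReal_natCast]

lemma sphere_zero_zpow_eq_diff (k : ℤ) :
    sphere (0 : ℚ_[p]) ((p : ℝ) ^ k) =
      closedBall 0 ((p : ℝ) ^ k) \ closedBall 0 ((p : ℝ) ^ (k - 1)) := by
  ext x
  rw [mem_sphere_zero_iff_norm, Set.mem_sdiff, mem_closedBall_zero_iff, mem_closedBall_zero_iff,
    norm_le_pow_iff_norm_lt_pow_add_one x (k - 1), sub_add_cancel, not_lt, le_antisymm_iff]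

lemma padicHaar_sphere (n : ℕ) :
    padicHaar p (sphere 0 ((p : ℝ) ^ (-(n : ℤ)))) =
      ENNReal.ofReal ((p : ℝ) ^ (-(n : ℤ)) - (p : ℝ) ^ (-(n + 1 : ℤ))) := by
  have hsub : -(n : ℤ) - 1 = -((n + 1 : ℕ) : ℤ) := by push_cast; ring
  rw [sphere_zero_zpow_eq_diff, hsub, measure_sdiff, padicHaar_closedBall, padicHaar_closedBall,
    ← ENNReal.ofReal_sub _ (zpow_nonneg p.cast_nonneg _), Nat.cast_succ]
  · exact closedBall_subset_closedBall (zpow_le_zpow_right₀ one_lt_natCast.le (by omega))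
  · exact measurableSet_closedBall.nullMeasurableSet
  · exact measure_closedBall_lt_top.ne

lemma mem_iUnion_sphere_iff {x : ℚ_[p]} :
    x ∈ ⋃ n : ℕ, sphere 0 ((p : ℝ) ^ (-(n + 1 : ℤ))) ↔ x ≠ 0 ∧ ‖x‖ < 1 := by
  simp only [Set.mem_iUnion, mem_sphere_zero_iff_norm]
  constructor
  · rintro ⟨n, hn⟩
    refine ⟨norm_pos_iff.mp (hn ▸ zpow_pos natCast_pos _), ?_⟩
    exact hn ▸ zpow_lt_one_of_neg₀ one_lt_natCast (by omega)
  · rintro ⟨hx0, hx1⟩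
    have hnorm := norm_eq_zpow_neg_valuation hx0
    have hval : 0 < x.valuation := by
      rw [hnorm] at hx1
      exact neg_neg_iff_pos.mp ((zpow_lt_one_iff_right₀ one_lt_natCast).mp hx1)
    exact ⟨(x.valuation - 1).toNat, by rw [hnorm]; congr 2; omega⟩

lemma pairwise_disjoint_sphere :
    Pairwise (Disjoint on fun n : ℕ => sphere (0 : ℚ_[p]) ((p : ℝ) ^ (-(n + 1 : ℤ)))) := by
  intro m n hmn
  refine Set.disjoint_left.mpr fun x hm hn => hmn ?_
  rw [mem_sphere_zero_iff_norm] at hm hn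
  have := zpow_right_injective₀ natCast_pos one_lt_natCast.ne' (hm.symm.trans hn)
  omega

lemma integral_padicHaar_eq_of_eq_on_sphere {f : ℚ_[p] → ℝ} {c : ℕ → ℝ} {s : ℝ}
    (hc : ∀ n, 0 ≤ c n)
    (hf : ∀ n : ℕ, ∀ x ∈ sphere (0 : ℚ_[p]) ((p : ℝ) ^ (-(n + 1 : ℤ))), f x = c n)
    (hf_one : ∀ x : ℚ_[p], 1 ≤ ‖x‖ → f x = 0)
    (hs : HasSum (fun n : ℕ => c n * ((p : ℝ) ^ (-(n + 1 : ℤ)) - (p : ℝ) ^ (-(n + 2 : ℤ)))) s) :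
    ∫ x, f x ∂padicHaar p = s := by
  set S := fun n : ℕ => sphere (0 : ℚ_[p]) ((p : ℝ) ^ (-(n + 1 : ℤ)))
  have hS : ∀ n, MeasurableSet (S n) := fun _ => isClosed_sphere.measurableSet
  have hterm : ∀ n : ℕ, 0 ≤ c n * ((p : ℝ) ^ (-(n + 1 : ℤ)) - (p : ℝ) ^ (-(n + 2 : ℤ))) :=
    fun n => mul_nonneg (hc n) (sub_nonneg.mpr (zpow_le_zpow_right₀ one_lt_natCast.le (by omega)))
  have hf_compl : ∀ᵐ x ∂padicHaar p, x ∉ ⋃ n, S n → f x = 0 := by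
    filter_upwards [compl_mem_ae_iff.mpr (measure_singleton (0 : ℚ_[p]))] with x hx0 hx
    rw [mem_iUnion_sphere_iff, not_and, not_lt] at hx
    exact hf_one x (hx hx0)
  have hf_nonneg : 0 ≤ᵐ[(padicHaar p).restrict (⋃ n, S n)] f := by
    refine ae_restrict_of_forall_mem (MeasurableSet.iUnion hS) fun x hx => ?_
    obtain ⟨n, hn⟩ := Set.mem_iUnion.mp hx
    exact (hf n x hn).symm ▸ hc n
  have hf_meas : AEStronglyMeasurable f ((padicHaar p).restrict (⋃ n, S n)) :=
    aestronglyMeasurable_iUnion_iff.mpr fun n => aestronglyMeasurable_const.congr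
      ((ae_restrict_mem (hS n)).mono fun x hx => (hf n x hx).symm)
  have hpiece : ∀ n, ∫⁻ x in S n, ENNReal.ofReal (f x) ∂padicHaar p =
      ENNReal.ofReal (c n * ((p : ℝ) ^ (-(n + 1 : ℤ)) - (p : ℝ) ^ (-(n + 2 : ℤ)))) := by
    intro n
    have hmeasure := padicHaar_sphere (p := p) (n + 1)
    rw [Nat.cast_succ, show (n : ℤ) + 1 + 1 = n + 2 by ring] at hmeasure
    rw [setLIntegral_congr_fun (hS n) fun x hx => by rw [hf n x hx], setLIntegral_const,
      ENNReal.ofReal_mul (hc n), hmeasure]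
  rw [← setIntegral_eq_integral_of_ae_compl_eq_zero hf_compl,
    integral_eq_lintegral_of_nonneg_ae hf_nonneg hf_meas,
    lintegral_iUnion hS pairwise_disjoint_sphere, tsum_congr hpiece,
    ← ENNReal.ofReal_tsum_of_nonneg hterm hs.summable, hs.tsum_eq,
    ENNReal.toReal_ofReal (hs.nonneg hterm)]

end Padic

theorem stmt17 (p : ℕ) [Fact p.Prime] (R₁ : ℚ_[p] → ℝ)
    (hRlt : ∀ τ : ℚ_[p], τ ≠ 0 → ‖τ‖ < 1 →
      R₁ τ = (p : ℝ) / ((p : ℝ) + 1)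
        - ((p : ℝ) * ((p : ℝ) - 1) / (((p : ℝ) + 1) * Real.log p)) * Real.log ‖τ‖)
    (hRge : ∀ τ : ℚ_[p], 1 ≤ ‖τ‖ → R₁ τ = 0) :
    (∀ τ : ℚ_[p], 0 < ‖τ‖ → ‖τ‖ < 1 → R₁ τ > 0) ∧
    ∫ τ : ℚ_[p], R₁ τ ∂(padicHaar p) = 1 := by
  have hp : (1 : ℝ) < p := Padic.one_lt_natCast
  have hlog : 0 < Real.log p := Real.log_pos hp
  have hslope : 0 < (p : ℝ) * ((p : ℝ) - 1) / (((p : ℝ) + 1) * Real.log p) := by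
    apply div_pos <;> nlinarith
  refine ⟨fun τ hτ0 hτ1 => ?_, ?_⟩
  · rw [hRlt τ (norm_pos_iff.mp hτ0) hτ1]
    have : 0 < (p : ℝ) / ((p : ℝ) + 1) := by apply div_pos <;> linarith
    nlinarith [Real.log_neg hτ0 hτ1]
  refine Padic.integral_padicHaar_eq_of_eq_on_sphere (fun n => ?_) (fun n x hx => ?_) hRge
    (hasSum_shell_weights hp)
  · have : 0 ≤ (p : ℝ) * (p - 1) / (p + 1) := div_nonneg (by nlinarith) (by linarith)
    positivity
  · obtain ⟨hx0, hx1⟩ := Padic.mem_iUnion_sphere_iff.mp (Set.mem_iUnion_of_mem n hx)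
    rw [mem_sphere_zero_iff_norm] at hx
    rw [hRlt x hx0 hx1, hx, Real.log_zpow]
    push_cast
    field_simp
    ring
end
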